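/- Let w_j, w_k, w_l, w_m, m_α, m_β be nonzero complex numbers and set E' = (m_β·w_l)/w_k, F' = (m_α·w_l)/w_m, C = (w_j·w_l)/(w_m·w_k). Assume ‖E'‖ < 1, ‖F'‖ < 1, ‖C‖ < 1. Define f : ℂ → ℂ by f(w) = −Li₂((m_β·w_m)/w_j) − Li₂((m_α·w_k)/w_j) + Li₂((m_β·w)/w_k) + Li₂((m_α·w)/w_m) − Li₂((w_j·w)/(w_m·w_k)) + π²/6 − log((m_β·w_m)/w_j)·log((m_α·w_k)/w_j). Then f has derivative D at w_l, where D = (1/w_l)·(−log(1−E') − log(1−F') + log(1−C)), and moreover exp(w_l·D) = (w_k·w_m − w_j·w_l)/((m_β·w_l − w_k)·(m_α·w_l − w_m)). -/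

import Mathlib

/-!
Differentiating the series termwise on the unit disc gives `z * Li₂'(z) = ∑ zⁿ / n = -log (1 - z)`,
so each summand `Li₂ (a * w / b)` contributes `-log (1 - a * w / b) / w` to the derivative at `w`.
Exponentiating `w_l * D` then turns the three logarithms back into `1 - E'`, `1 - F'` and `1 - C`.
-/

noncomputable def Li2 (z : ℂ) : ℂ := ∑' n : ℕ, z ^ (n + 1) / ((n : ℂ) + 1) ^ 2

open Complex

lemma norm_div_natCast_add_one_pow_le (x : ℂ) (n m : ℕ) : ‖x / ((n : ℂ) + 1) ^ m‖ ≤ ‖x‖ := by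
  rw [norm_div, norm_pow]
  have h : ‖(n : ℂ) + 1‖ = n + 1 := by exact_mod_cast Complex.norm_natCast (n + 1)
  refine div_le_self (norm_nonneg x) (one_le_pow₀ ?_)
  rw [h]
  linarith [n.cast_nonneg (α := ℝ)]

lemma summable_Li2 {z : ℂ} (hz : ‖z‖ < 1) :
    Summable fun n : ℕ => z ^ (n + 1) / ((n : ℂ) + 1) ^ 2 := by
  refine .of_norm_bounded ((summable_nat_add_iff 1).mpr (summable_geometric_of_lt_one
    (norm_nonneg z) hz)) fun n => ?_
  simpa only [norm_pow] using norm_div_natCast_add_one_pow_le (z ^ (n + 1)) n 2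

lemma hasDerivAt_Li2_tsum {z : ℂ} (hz : ‖z‖ < 1) :
    HasDerivAt Li2 (∑' n : ℕ, z ^ n / ((n : ℂ) + 1)) z := by
  obtain ⟨r, hzr, hr1⟩ := exists_between hz
  have hz_mem : z ∈ Metric.ball (0 : ℂ) r := mem_ball_zero_iff.mpr hzr
  show HasDerivAt (fun z => ∑' n : ℕ, z ^ (n + 1) / ((n : ℂ) + 1) ^ 2) _ z
  refine hasDerivAt_tsum_of_isPreconnected (t := Metric.ball 0 r)
    (g := fun (n : ℕ) z => z ^ (n + 1) / ((n : ℂ) + 1) ^ 2)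
    (g' := fun (n : ℕ) z => z ^ n / ((n : ℂ) + 1))
    (summable_geometric_of_lt_one ((norm_nonneg z).trans hzr.le) hr1) Metric.isOpen_ball
    (convex_ball 0 r).isPreconnected (fun n w _ => ?_) (fun n w hw => ?_) hz_mem
    (summable_Li2 hz) hz_mem
  · have hn : (n : ℂ) + 1 ≠ 0 := Nat.cast_add_one_ne_zero n
    refine ((hasDerivAt_pow (n + 1) w).div_const (((n : ℂ) + 1) ^ 2)).congr_deriv ?_
    push_cast
    field_simp
  · calc ‖w ^ n / ((n : ℂ) + 1)‖ ≤ ‖w‖ ^ n := by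
          simpa only [pow_one, norm_pow] using norm_div_natCast_add_one_pow_le (w ^ n) n 1
      _ ≤ r ^ n := pow_le_pow_left₀ (norm_nonneg w) (mem_ball_zero_iff.mp hw).le n

theorem hasDerivAt_Li2 {z : ℂ} (hz : ‖z‖ < 1) (hz0 : z ≠ 0) :
    HasDerivAt Li2 (-log (1 - z) / z) z := by
  have hsum : HasSum (fun n : ℕ => z ^ n / ((n : ℂ) + 1)) (-log (1 - z) / z) := by
    refine ((hasSum_taylorSeries_neg_log' hz).div_const z).congr_fun fun n => ?_
    field_simp
    ring
  simpa only [hsum.tsum_eq] using hasDerivAt_Li2_tsum hz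

theorem hasDerivAt_Li2_mul_div {a b w : ℂ} (ha : a ≠ 0) (hb : b ≠ 0) (hw : w ≠ 0)
    (h : ‖a * w / b‖ < 1) :
    HasDerivAt (fun w => Li2 (a * w / b)) (-log (1 - a * w / b) / w) w := by
  have hinner : HasDerivAt (fun w => a * w / b) (a / b) w := by
    simpa using ((hasDerivAt_id w).const_mul a).div_const b
  refine ((hasDerivAt_Li2 h (by positivity)).comp w hinner).congr_deriv ?_
  field_simp

lemma exp_neg_log_sub_log_add_log {x y z : ℂ} (hx : x ≠ 0) (hy : y ≠ 0) (hz : z ≠ 0) :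
    exp (-log x - log y + log z) = z / (x * y) := by
  rw [neg_sub_left, ← sub_eq_neg_add, exp_sub, exp_add, exp_log hx, exp_log hy, exp_log hz, mul_comm]

lemma one_sub_ne_zero_of_norm_lt_one {R : Type*} [NormedRing R] [NormOneClass R] {x : R}
    (hx : ‖x‖ < 1) : 1 - x ≠ 0 := by
  rw [sub_ne_zero]
  rintro rfl
  simp at hx

/-- The crossing potential of a negative crossing, viewed as a function of the
region variable `w_l`, has derivative `D` at `w_l`, and `exp (w_l * D) = τ_{c,l}`. -/
theorem crossing_potential_deriv_wl_neg
    (wj wk wl wm mα mβ : ℂ)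
    (hwj : wj ≠ 0) (hwk : wk ≠ 0) (hwl : wl ≠ 0) (hwm : wm ≠ 0)
    (hmα : mα ≠ 0) (hmβ : mβ ≠ 0)
    (E' F' C D : ℂ)
    (hE : E' = (mβ * wl) / wk) (hF : F' = (mα * wl) / wm)
    (hC : C = (wj * wl) / (wm * wk))
    (hEnorm : ‖E'‖ < 1) (hFnorm : ‖F'‖ < 1) (hCnorm : ‖C‖ < 1)
    (hD : D = (1 / wl) * (-Complex.log (1 - E') - Complex.log (1 - F') + Complex.log (1 - C))) :
    HasDerivAt (fun w : ℂ =>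
      -Li2 ((mβ * wm) / wj) - Li2 ((mα * wk) / wj) + Li2 ((mβ * w) / wk) + Li2 ((mα * w) / wm)
        - Li2 ((wj * w) / (wm * wk)) + (Real.pi : ℂ) ^ 2 / 6
        - Complex.log ((mβ * wm) / wj) * Complex.log ((mα * wk) / wj)) D wl ∧
    Complex.exp (wl * D) =
      (wk * wm - wj * wl) / ((mβ * wl - wk) * (mα * wl - wm)) := by
  subst hE hF hC hD
  refine ⟨?_, ?_⟩
  · have H := (((((hasDerivAt_const wl (-Li2 (mβ * wm / wj) - Li2 (mα * wk / wj))).add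
      (hasDerivAt_Li2_mul_div hmβ hwk hwl hEnorm)).add
      (hasDerivAt_Li2_mul_div hmα hwm hwl hFnorm)).sub
      (hasDerivAt_Li2_mul_div hwj (mul_ne_zero hwm hwk) hwl hCnorm)).add_const
      ((Real.pi : ℂ) ^ 2 / 6)).sub_const (log (mβ * wm / wj) * log (mα * wk / wj))
    refine H.congr_deriv ?_
    ring
  · have hE1 := one_sub_ne_zero_of_norm_lt_one hEnorm
    have hF1 := one_sub_ne_zero_of_norm_lt_one hFnorm
    have hC1 := one_sub_ne_zero_of_norm_lt_one hCnorm
    have hE2 : wk - mβ * wl ≠ 0 := (div_ne_zero_iff.mp (one_sub_div (a := mβ * wl) hwk ▸ hE1)).1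
    have hF2 : wm - mα * wl ≠ 0 := (div_ne_zero_iff.mp (one_sub_div (a := mα * wl) hwm ▸ hF1)).1
    rw [← mul_assoc, mul_one_div_cancel hwl, one_mul, exp_neg_log_sub_log_add_log hE1 hF1 hC1]
    field_simp
    ring
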